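/- arXiv:0909.2326 — 2 statements merged into one kernel-verified Lean document; each statement's English description precedes it below -/
import Mathlib

section
/- Let U ⊆ ℂ be open and let g : U → ℂ be holomorphic and nowhere zero. Define W := (3/2)·(g'/g)² − g''/g − (1/(1 + |g|²))·(g'/g)² on U. Then both the real part and the imaginary part of W satisfy the Jacobi equation associated to g on U: Δ(Re W) + (8|g'|²/(1 + |g|²)²)·(Re W) = 0 and Δ(Im W) + (8|g'|²/(1 + |g|²)²)·(Im W) = 0. In particular the Shiffman function S := Im W is a Jacobi function. -/
/-!
Write `W = A - B / (1 + |g|²)` with `A = (3/2)(g'/g)² - g''/g` and `B = (g'/g)²`, both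
holomorphic where `g ≠ 0`. With `Δ = 4 ∂∂̄`, a Wirtinger-calculus computation gives, for any
holomorphic `A`, `B`, `g`,
`ΔW + 8|g'|²/(1+|g|²)² · W = 4 conj(g') (1+|g|²)⁻² (g B' + 2 g' A - g' B)`,
and for Shiffman's `A`, `B` the holomorphic factor `g B' + 2 g' A - g' B` vanishes identically.
Since the potential is real and `Δ` commutes with the real-linear maps `Re` and `Im`, both
parts of `W` are Jacobi functions.
-/

open Complex

/-- Flat Laplacian `∂²/∂x² + ∂²/∂y²` on `ℂ ≅ ℝ²` for real-valued functions. -/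
noncomputable def lap (f : ℂ → ℝ) (z : ℂ) : ℝ :=
  fderiv ℝ (fun w => fderiv ℝ f w 1) z 1
    + fderiv ℝ (fun w => fderiv ℝ f w Complex.I) z Complex.I

/-- The complex Shiffman expression of a nowhere-zero holomorphic `g`:
`W = (3/2)(g'/g)² − g''/g − (1/(1+|g|²))(g'/g)²`. -/
noncomputable def shiffmanW (g : ℂ → ℂ) (z : ℂ) : ℂ :=
  (3 / 2) * (deriv g z / g z) ^ 2 - deriv (deriv g) z / g z
    - (1 / ((1 + ‖g z‖ ^ 2 : ℝ) : ℂ)) * (deriv g z / g z) ^ 2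

open ComplexConjugate Filter Topology

noncomputable def wirtingerCLM (p q : ℂ) : ℂ →L[ℝ] ℂ :=
  p • ContinuousLinearMap.id ℝ ℂ + q • conjCLE.toContinuousLinearMap

@[simp]
lemma wirtingerCLM_apply (p q v : ℂ) : wirtingerCLM p q v = p * v + q * conj v := by
  simp [wirtingerCLM]

/-- `∂f = p` and `∂̄f = q` at `z`, i.e. the real derivative of `f` is `v ↦ p v + q conj v`. -/
def HasWirtingerDerivAt (f : ℂ → ℂ) (p q z : ℂ) : Prop :=
  HasFDerivAt f (wirtingerCLM p q) z

namespace HasWirtingerDerivAt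

variable {f h : ℂ → ℂ} {p q p' q' z : ℂ}

lemma congr_deriv (hf : HasWirtingerDerivAt f p q z) (hp : p = p') (hq : q = q') :
    HasWirtingerDerivAt f p' q' z :=
  hp ▸ hq ▸ hf

lemma const (c z : ℂ) : HasWirtingerDerivAt (fun _ => c) 0 0 z := by
  have h0 : wirtingerCLM 0 0 = 0 := by ext v; simp
  simpa [HasWirtingerDerivAt, h0] using hasFDerivAt_const c z

lemma add (hf : HasWirtingerDerivAt f p q z) (hh : HasWirtingerDerivAt h p' q' z) :
    HasWirtingerDerivAt (fun w => f w + h w) (p + p') (q + q') z := by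
  have e : wirtingerCLM (p + p') (q + q') = wirtingerCLM p q + wirtingerCLM p' q' := by
    ext v; simp; ring
  rw [HasWirtingerDerivAt, e]
  exact HasFDerivAt.add hf hh

lemma sub (hf : HasWirtingerDerivAt f p q z) (hh : HasWirtingerDerivAt h p' q' z) :
    HasWirtingerDerivAt (fun w => f w - h w) (p - p') (q - q') z := by
  have e : wirtingerCLM (p - p') (q - q') = wirtingerCLM p q - wirtingerCLM p' q' := by
    ext v; simp; ring
  rw [HasWirtingerDerivAt, e]
  exact HasFDerivAt.sub hf hh

lemma mul (hf : HasWirtingerDerivAt f p q z) (hh : HasWirtingerDerivAt h p' q' z) :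
    HasWirtingerDerivAt (fun w => f w * h w) (p * h z + f z * p') (q * h z + f z * q') z := by
  have e : wirtingerCLM (p * h z + f z * p') (q * h z + f z * q')
      = f z • wirtingerCLM p' q' + (wirtingerCLM p q).smulRight (h z) := by
    ext v; simp; ring
  rw [HasWirtingerDerivAt, e]
  exact HasFDerivAt.mul' hf hh

lemma mul_const (hf : HasWirtingerDerivAt f p q z) (c : ℂ) :
    HasWirtingerDerivAt (fun w => f w * c) (p * c) (q * c) z :=
  (hf.mul (const c z)).congr_deriv (by ring) (by ring)

lemma sq (hf : HasWirtingerDerivAt f p q z) :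
    HasWirtingerDerivAt (fun w => f w ^ 2) (2 * f z * p) (2 * f z * q) z := by
  simp only [pow_two]
  exact (hf.mul hf).congr_deriv (by ring) (by ring)

lemma inv (hf : HasWirtingerDerivAt f p q z) (hz : f z ≠ 0) :
    HasWirtingerDerivAt (fun w => (f w)⁻¹) (-p * (f z)⁻¹ ^ 2) (-q * (f z)⁻¹ ^ 2) z := by
  have e : wirtingerCLM (-p * (f z)⁻¹ ^ 2) (-q * (f z)⁻¹ ^ 2)
      = (-ContinuousLinearMap.mulLeftRight ℝ ℂ (f z)⁻¹ (f z)⁻¹).comp (wirtingerCLM p q) := by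
    ext v; simp; ring
  rw [HasWirtingerDerivAt, e]
  exact (hasFDerivAt_inv' hz).comp z hf

end HasWirtingerDerivAt

lemma HasDerivAt.hasWirtingerDerivAt {f : ℂ → ℂ} {f' z : ℂ} (hf : HasDerivAt f f' z) :
    HasWirtingerDerivAt f f' 0 z := by
  have e : wirtingerCLM f' 0
      = (ContinuousLinearMap.smulRight (1 : ℂ →L[ℂ] ℂ) f').restrictScalars ℝ := by
    ext v; simp [mul_comm]
  rw [HasWirtingerDerivAt, e]
  exact hf.hasFDerivAt.restrictScalars ℝ

lemma HasDerivAt.hasWirtingerDerivAt_conj {f : ℂ → ℂ} {f' z : ℂ} (hf : HasDerivAt f f' z) :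
    HasWirtingerDerivAt (fun w => conj (f w)) 0 (conj f') z := by
  have e : wirtingerCLM 0 (conj f') = conjCLE.toContinuousLinearMap.comp
      ((ContinuousLinearMap.smulRight (1 : ℂ →L[ℂ] ℂ) f').restrictScalars ℝ) := by
    ext v; simp [mul_comm]
  rw [HasWirtingerDerivAt, e]
  exact conjCLE.toContinuousLinearMap.hasFDerivAt.comp z (hf.hasFDerivAt.restrictScalars ℝ)

lemma lap_comp_eq (T : ℂ →L[ℝ] ℝ) {f p q : ℂ → ℂ} {z pp pq qp qq : ℂ}
    (hf : ∀ᶠ w in 𝓝 z, HasWirtingerDerivAt f (p w) (q w) w)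
    (hp : HasWirtingerDerivAt p pp pq z) (hq : HasWirtingerDerivAt q qp qq z) :
    lap (fun w => T (f w)) z = T (2 * (pq + qp)) := by
  have hdir : ∀ v, (fun w => fderiv ℝ (fun w => T (f w)) w v) =ᶠ[𝓝 z]
      fun w => T (p w * v + q w * conj v) := fun v => by
    filter_upwards [hf] with w hw
    have hTf : HasFDerivAt (fun w => T (f w)) (T.comp (wirtingerCLM (p w) (q w))) w :=
      T.hasFDerivAt.comp w hw
    simp [hTf.fderiv]
  have hsecond : ∀ v, fderiv ℝ (fun w => fderiv ℝ (fun w => T (f w)) w v) z v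
      = T ((pp * v + pq * conj v) * v + (qp * v + qq * conj v) * conj v) := fun v => by
    have hTd : HasFDerivAt (fun w => T (p w * v + q w * conj v))
        (T.comp (wirtingerCLM (pp * v + qp * conj v) (pq * v + qq * conj v))) z :=
      T.hasFDerivAt.comp z ((hp.mul_const v).add (hq.mul_const (conj v)))
    rw [(hdir v).fderiv_eq, hTd.fderiv, ContinuousLinearMap.comp_apply, wirtingerCLM_apply]
    congr 1
    ring
  rw [lap, hsecond, hsecond, ← map_add]
  congr 1
  simp only [map_one, conj_I]
  linear_combination (pp + qq - pq - qp) * I_mul_I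

lemma ofReal_one_add_norm_sq (u : ℂ) : ((1 + ‖u‖ ^ 2 : ℝ) : ℂ) = 1 + u * conj u := by
  push_cast
  rw [mul_conj']

lemma one_add_mul_conj_ne_zero (u : ℂ) : 1 + u * conj u ≠ 0 := by
  rw [← ofReal_one_add_norm_sq, ofReal_ne_zero]
  positivity

lemma HasDerivAt.hasWirtingerDerivAt_inv_one_add_mul_conj {g : ℂ → ℂ} {g' z : ℂ}
    (hg : HasDerivAt g g' z) :
    HasWirtingerDerivAt (fun w => (1 + g w * conj (g w))⁻¹)
      (-(g' * conj (g z)) * (1 + g z * conj (g z))⁻¹ ^ 2)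
      (-(g z * conj g') * (1 + g z * conj (g z))⁻¹ ^ 2) z :=
  (((HasWirtingerDerivAt.const 1 z).add
    (hg.hasWirtingerDerivAt.mul hg.hasWirtingerDerivAt_conj)).inv
    (one_add_mul_conj_ne_zero (g z))).congr_deriv (by ring) (by ring)

/-- `Δ_M - 2K` of the minimal surface with Weierstrass data `(g, dz)`, written in the conformal
coordinate `z` (up to the positive conformal factor). -/
noncomputable def jacobiOperator (g : ℂ → ℂ) (v : ℂ → ℝ) (z : ℂ) : ℝ :=
  lap v z + 8 * ‖deriv g z‖ ^ 2 / (1 + ‖g z‖ ^ 2) ^ 2 * v z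

theorem jacobiOperator_comp_sub_mul_inv_one_add_mul_conj (T : ℂ →L[ℝ] ℝ) {U : Set ℂ}
    (hU : IsOpen U) {A B g : ℂ → ℂ} (hA : AnalyticOnNhd ℂ A U) (hB : AnalyticOnNhd ℂ B U)
    (hg : AnalyticOnNhd ℂ g U) {z : ℂ} (hz : z ∈ U) :
    jacobiOperator g (fun w => T (A w - B w * (1 + g w * conj (g w))⁻¹)) z
      = T (4 * conj (deriv g z) * (1 + g z * conj (g z))⁻¹ ^ 2
          * (g z * deriv B z + 2 * deriv g z * A z - deriv g z * B z)) := by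
  have hasDerivAt {h : ℂ → ℂ} (hh : AnalyticOnNhd ℂ h U) {w : ℂ} (hw : w ∈ U) :
      HasDerivAt h (deriv h w) w :=
    (hh w hw).differentiableAt.hasDerivAt
  set φ := fun w => (1 + g w * conj (g w))⁻¹
  have hF : ∀ w ∈ U, HasWirtingerDerivAt (fun w => A w - B w * φ w)
      (deriv A w - deriv B w * φ w + B w * deriv g w * conj (g w) * φ w ^ 2)
      (B w * g w * conj (deriv g w) * φ w ^ 2) w := fun w hw =>
    ((hasDerivAt hA hw).hasWirtingerDerivAt.sub ((hasDerivAt hB hw).hasWirtingerDerivAt.mul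
      (hasDerivAt hg hw).hasWirtingerDerivAt_inv_one_add_mul_conj)).congr_deriv
      (by ring) (by ring)
  have hφ := (hasDerivAt hg hz).hasWirtingerDerivAt_inv_one_add_mul_conj
  have hg' := (hasDerivAt hg hz).hasWirtingerDerivAt
  have hB' := (hasDerivAt hB hz).hasWirtingerDerivAt
  have hp := ((hasDerivAt hA.deriv hz).hasWirtingerDerivAt.sub
    ((hasDerivAt hB.deriv hz).hasWirtingerDerivAt.mul hφ)).add
    (((hB'.mul (hasDerivAt hg.deriv hz).hasWirtingerDerivAt).mul
      (hasDerivAt hg hz).hasWirtingerDerivAt_conj).mul hφ.sq)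
  have hq := ((hB'.mul hg').mul (hasDerivAt hg.deriv hz).hasWirtingerDerivAt_conj).mul hφ.sq
  have hcoef (c : ℝ) (x : ℂ) : c * T x = T (c * x) := by
    rw [← real_smul, T.map_smul, smul_eq_mul]
  rw [jacobiOperator, lap_comp_eq T (eventually_of_mem (hU.mem_nhds hz) hF) hp hq, hcoef,
    ← map_add]
  congr 1
  have hD := one_add_mul_conj_ne_zero (g z)
  push_cast
  rw [← mul_conj', ← mul_conj']
  field_simp
  ring

lemma shiffman_identity {g : ℂ → ℂ} {z : ℂ} (hg : DifferentiableAt ℂ g z)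
    (hg' : DifferentiableAt ℂ (deriv g) z) (hz : g z ≠ 0) :
    g z * deriv (fun w => (deriv g w / g w) ^ 2) z
      + 2 * deriv g z * (3 / 2 * (deriv g z / g z) ^ 2 - deriv (deriv g) z / g z)
      - deriv g z * (deriv g z / g z) ^ 2 = 0 := by
  have hB' : HasDerivAt (fun w => (deriv g w / g w) ^ 2) _ z :=
    (hg'.hasDerivAt.div hg.hasDerivAt hz).pow 2
  rw [hB'.deriv]
  simp only [Pi.div_apply, Nat.add_one_sub_one, pow_one, Nat.cast_ofNat]
  field_simp
  ring

/-- Both the real and the imaginary part of the Shiffman expression `W` of a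
nowhere-zero holomorphic function `g` satisfy the Jacobi equation
`Δv + (8|g'|²/(1+|g|²)²) v = 0`; in particular the Shiffman function `S = Im W`
is a Jacobi function. -/
theorem shiffman_function_is_jacobi_function
    (U : Set ℂ) (hU : IsOpen U) (g : ℂ → ℂ)
    (hg : DifferentiableOn ℂ g U) (hg0 : ∀ z ∈ U, g z ≠ 0) :
    ∀ z ∈ U,
      (lap (fun w => (shiffmanW g w).re) z
          + (8 * ‖deriv g z‖ ^ 2 / (1 + ‖g z‖ ^ 2) ^ 2)
            * (shiffmanW g z).re = 0) ∧
      (lap (fun w => (shiffmanW g w).im) z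
          + (8 * ‖deriv g z‖ ^ 2 / (1 + ‖g z‖ ^ 2) ^ 2)
            * (shiffmanW g z).im = 0) := by
  intro z hz
  have hg : AnalyticOnNhd ℂ g U := hg.analyticOnNhd hU
  have hB : AnalyticOnNhd ℂ (fun w => (deriv g w / g w) ^ 2) U := (hg.deriv.div hg hg0).pow 2
  have hA : AnalyticOnNhd ℂ
      (fun w => 3 / 2 * (deriv g w / g w) ^ 2 - deriv (deriv g) w / g w) U :=
    (analyticOnNhd_const.mul hB).sub (hg.deriv.deriv.div hg hg0)
  have hW : shiffmanW g = fun w => (3 / 2 * (deriv g w / g w) ^ 2 - deriv (deriv g) w / g w)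
      - (deriv g w / g w) ^ 2 * (1 + g w * conj (g w))⁻¹ := by
    funext w
    rw [shiffmanW, ofReal_one_add_norm_sq]
    ring
  have key := shiffman_identity (hg z hz).differentiableAt (hg.deriv z hz).differentiableAt
    (hg0 z hz)
  constructor
  · simpa [jacobiOperator, hW, key] using
      jacobiOperator_comp_sub_mul_inv_one_add_mul_conj reCLM hU hA hB hg hz
  · simpa [jacobiOperator, hW, key] using
      jacobiOperator_comp_sub_mul_inv_one_add_mul_conj imCLM hU hA hB hg hz
end

section
/- Let Ω ⊆ ℂ × ℂ be open and let y : Ω → ℂ be holomorphic in both variables (z, t) and nowhere zero. Define u := −(∂²y/∂z²)/y and g := 1/y² on Ω, and assume ∂y/∂t = (∂u/∂z)·y − 2·u·(∂y/∂z) on Ω. Then on Ω: ∂g/∂t = −2·∂/∂z( g·u ), and moreover ∂g/∂t = −∂³g/∂z³ + 3·(∂g/∂z)·(∂²g/∂z²)/g − (3/2)·(∂g/∂z)³/g². (This is the computation in Section 7.3 of the paper showing that the KdV-evolved family g_t satisfies, up to a multiplicative constant, the Shiffman evolution equation of Theorem 6.10(iii).) -/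
/-!
Write `g = 1/y²`, `' = ∂/∂z`. Then `∂g/∂t = -2 (∂y/∂t)/y³`, and inserting the evolution of `y`
gives `-2 (u' y - 2 u y')/y³ = -2 (g' u + g u') = -2 (g u)'`. Since `y''/y = -(g'/2g)' + (g'/2g)²`,
the product `g u = -g y''/y` equals `g''/2 - 3 g'²/(4g)`, an expression in `g` alone, and
differentiating it yields the Shiffman right-hand side.
-/

open Complex

/-- Partial derivative in the first (space, `z`) variable of a function on `ℂ × ℂ`. -/
noncomputable def dz (f : ℂ × ℂ → ℂ) (p : ℂ × ℂ) : ℂ := fderiv ℂ f p (1, 0)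

/-- Partial derivative in the second (time, `t`) variable of a function on `ℂ × ℂ`. -/
noncomputable def dt (f : ℂ × ℂ → ℂ) (p : ℂ × ℂ) : ℂ := fderiv ℂ f p (0, 1)

/-- The Schrödinger potential `u = −(∂²y/∂z²)/y` of a nowhere-zero function `y(z,t)`. -/
noncomputable def schrodingerPotential (y : ℂ × ℂ → ℂ) : ℂ × ℂ → ℂ := fun p =>
  -(dz (dz y) p) / y p

/-- The "Gauss map" `g = 1/y²` associated to `y(z,t)`. -/
noncomputable def gaussOf (y : ℂ × ℂ → ℂ) : ℂ × ℂ → ℂ := fun p => 1 / (y p) ^ 2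

section DirectionalDerivative

variable {𝕜 E : Type*} [NontriviallyNormedField 𝕜] [NormedAddCommGroup E] [NormedSpace 𝕜 E]
  {f g : E → 𝕜} {x v : E}

theorem fderiv_fun_mul_apply (hf : DifferentiableAt 𝕜 f x) (hg : DifferentiableAt 𝕜 g x) :
    fderiv 𝕜 (fun q => f q * g q) x v = fderiv 𝕜 f x v * g x + f x * fderiv 𝕜 g x v := by
  rw [fderiv_fun_mul hf hg]
  simp only [add_apply, smul_apply, smul_eq_mul]
  ring

theorem fderiv_fun_sub_apply (hf : DifferentiableAt 𝕜 f x) (hg : DifferentiableAt 𝕜 g x) :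
    fderiv 𝕜 (fun q => f q - g q) x v = fderiv 𝕜 f x v - fderiv 𝕜 g x v := by
  rw [fderiv_fun_sub hf hg, sub_apply]

theorem fderiv_const_mul_apply (hf : DifferentiableAt 𝕜 f x) (c : 𝕜) :
    fderiv 𝕜 (fun q => c * f q) x v = c * fderiv 𝕜 f x v := by
  rw [fderiv_const_mul hf, smul_apply, smul_eq_mul]

theorem fderiv_fun_inv_apply (hf : DifferentiableAt 𝕜 f x) (hx : f x ≠ 0) :
    fderiv 𝕜 (fun q => (f q)⁻¹) x v = -fderiv 𝕜 f x v / f x ^ 2 := by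
  have h : HasFDerivAt (fun q => (f q)⁻¹) (-(f x ^ 2)⁻¹ • fderiv 𝕜 f x) x :=
    (hasDerivAt_inv hx).comp_hasFDerivAt x hf.hasFDerivAt
  rw [h.fderiv]
  simp [div_eq_mul_inv, mul_comm]

theorem fderiv_fun_div_apply (hf : DifferentiableAt 𝕜 f x) (hg : DifferentiableAt 𝕜 g x)
    (hx : g x ≠ 0) :
    fderiv 𝕜 (fun q => f q / g q) x v
      = (fderiv 𝕜 f x v * g x - f x * fderiv 𝕜 g x v) / g x ^ 2 := by
  simp only [div_eq_mul_inv]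
  rw [fderiv_fun_mul_apply hf (hg.fun_inv hx), fderiv_fun_inv_apply hg hx]
  field_simp
  ring

theorem fderiv_fun_pow_apply (n : ℕ) (hf : DifferentiableAt 𝕜 f x) :
    fderiv 𝕜 (fun q => f q ^ n) x v = n * f x ^ (n - 1) * fderiv 𝕜 f x v := by
  rw [fderiv_fun_pow n hf]
  simp [nsmul_eq_mul, mul_assoc]

end DirectionalDerivative

section PartialDerivatives

variable {Ω : Set (ℂ × ℂ)} {f g : ℂ × ℂ → ℂ} {p : ℂ × ℂ}

theorem dz_const (c : ℂ) : dz (fun _ => c) p = 0 := by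
  simp [dz]

theorem dz_fun_mul (hf : DifferentiableAt ℂ f p) (hg : DifferentiableAt ℂ g p) :
    dz (fun q => f q * g q) p = dz f p * g p + f p * dz g p :=
  fderiv_fun_mul_apply hf hg

theorem dz_fun_sub (hf : DifferentiableAt ℂ f p) (hg : DifferentiableAt ℂ g p) :
    dz (fun q => f q - g q) p = dz f p - dz g p :=
  fderiv_fun_sub_apply hf hg

theorem dz_const_mul (hf : DifferentiableAt ℂ f p) (c : ℂ) :
    dz (fun q => c * f q) p = c * dz f p :=
  fderiv_const_mul_apply hf c

theorem dz_fun_div (hf : DifferentiableAt ℂ f p) (hg : DifferentiableAt ℂ g p) (hp : g p ≠ 0) :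
    dz (fun q => f q / g q) p = (dz f p * g p - f p * dz g p) / g p ^ 2 :=
  fderiv_fun_div_apply hf hg hp

theorem dz_fun_pow (n : ℕ) (hf : DifferentiableAt ℂ f p) :
    dz (fun q => f q ^ n) p = n * f p ^ (n - 1) * dz f p :=
  fderiv_fun_pow_apply n hf

theorem analyticOnNhd_dz (hf : AnalyticOnNhd ℂ f Ω) : AnalyticOnNhd ℂ (dz f) Ω :=
  (ContinuousLinearMap.apply ℂ ℂ ((1, 0) : ℂ × ℂ)).comp_analyticOnNhd hf.fderiv

theorem dz_congr (hΩ : IsOpen Ω) (h : Set.EqOn f g Ω) : Set.EqOn (dz f) (dz g) Ω := fun q hq => by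
  simp only [dz, (h.eventuallyEq_of_mem (hΩ.mem_nhds hq)).fderiv_eq]

/-- The Shiffman equation is the conservation law `∂g/∂t = -2 ∂_z (shiffmanFlux g)`. -/
noncomputable def shiffmanFlux (g : ℂ × ℂ → ℂ) : ℂ × ℂ → ℂ := fun q =>
  dz (dz g) q / 2 - 3 / 4 * dz g q ^ 2 / g q

theorem neg_two_mul_dz_shiffmanFlux (hg : DifferentiableAt ℂ g p)
    (hg' : DifferentiableAt ℂ (dz g) p) (hg'' : DifferentiableAt ℂ (dz (dz g)) p) (hp : g p ≠ 0) :
    -2 * dz (shiffmanFlux g) p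
      = -(dz (dz (dz g)) p) + 3 * dz g p * dz (dz g) p / g p
        - (3 / 2) * (dz g p) ^ 3 / (g p) ^ 2 := by
  have hsq : DifferentiableAt ℂ (fun q => 3 / 4 * dz g q ^ 2) p := by fun_prop
  unfold shiffmanFlux
  rw [dz_fun_sub (by fun_prop) (by fun_prop (disch := assumption)),
    dz_fun_div hg'' (by fun_prop) two_ne_zero, dz_fun_div hsq hg hp,
    dz_const_mul (by fun_prop), dz_fun_pow 2 hg', dz_const]
  field_simp
  ring

end PartialDerivatives

section GaussMap

variable {Ω : Set (ℂ × ℂ)} {y : ℂ × ℂ → ℂ} {p v : ℂ × ℂ}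

theorem gaussOf_ne_zero (h : y p ≠ 0) : gaussOf y p ≠ 0 :=
  one_div_ne_zero (pow_ne_zero 2 h)

theorem analyticOnNhd_gaussOf (hy : AnalyticOnNhd ℂ y Ω) (hy0 : ∀ p ∈ Ω, y p ≠ 0) :
    AnalyticOnNhd ℂ (gaussOf y) Ω :=
  analyticOnNhd_const.div (hy.pow 2) fun p hp => pow_ne_zero 2 (hy0 p hp)

theorem analyticOnNhd_schrodingerPotential (hy : AnalyticOnNhd ℂ y Ω)
    (hy0 : ∀ p ∈ Ω, y p ≠ 0) : AnalyticOnNhd ℂ (schrodingerPotential y) Ω :=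
  (analyticOnNhd_dz (analyticOnNhd_dz hy)).neg.div hy hy0

theorem fderiv_gaussOf_apply (hy : DifferentiableAt ℂ y p) (h0 : y p ≠ 0) :
    fderiv ℂ (gaussOf y) p v = -2 * fderiv ℂ y p v / y p ^ 3 := by
  unfold gaussOf
  rw [fderiv_fun_div_apply (differentiableAt_const _) (hy.fun_pow 2) (pow_ne_zero 2 h0),
    fderiv_fun_pow_apply 2 hy]
  simp only [fderiv_const_apply, zero_apply]
  field_simp
  ring

theorem dz_gaussOf_eqOn (hy : AnalyticOnNhd ℂ y Ω) (hy0 : ∀ p ∈ Ω, y p ≠ 0) :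
    Set.EqOn (dz (gaussOf y)) (fun q => -2 * dz y q / y q ^ 3) Ω := fun q hq =>
  fderiv_gaussOf_apply (hy q hq).differentiableAt (hy0 q hq)

theorem dz_dz_gaussOf_eqOn (hΩ : IsOpen Ω) (hy : AnalyticOnNhd ℂ y Ω)
    (hy0 : ∀ p ∈ Ω, y p ≠ 0) :
    Set.EqOn (dz (dz (gaussOf y)))
      (fun q => -2 * dz (dz y) q / y q ^ 3 + 6 * dz y q ^ 2 / y q ^ 4) Ω := by
  intro q hq
  have hyq := (hy q hq).differentiableAt
  have hy' := (analyticOnNhd_dz hy q hq).differentiableAt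
  have hy0' := hy0 q hq
  rw [dz_congr hΩ (dz_gaussOf_eqOn hy hy0) hq, dz_fun_div (by fun_prop) (by fun_prop) (by simpa),
    dz_const_mul hy', dz_fun_pow 3 hyq]
  field_simp
  ring

theorem gaussOf_mul_schrodingerPotential_eqOn (hΩ : IsOpen Ω) (hy : AnalyticOnNhd ℂ y Ω)
    (hy0 : ∀ p ∈ Ω, y p ≠ 0) :
    Set.EqOn (fun q => gaussOf y q * schrodingerPotential y q) (shiffmanFlux (gaussOf y)) Ω := by
  intro q hq
  have hy0' := hy0 q hq
  simp only [shiffmanFlux, dz_dz_gaussOf_eqOn hΩ hy hy0 hq, dz_gaussOf_eqOn hy hy0 hq, gaussOf,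
    schrodingerPotential]
  field_simp
  ring

theorem dt_gaussOf_eq_neg_two_mul_dz (hy : AnalyticOnNhd ℂ y Ω) (hy0 : ∀ p ∈ Ω, y p ≠ 0)
    (hp : p ∈ Ω)
    (hJ : dt y p = dz (schrodingerPotential y) p * y p - 2 * schrodingerPotential y p * dz y p) :
    dt (gaussOf y) p = -2 * dz (fun q => gaussOf y q * schrodingerPotential y q) p := by
  have hy' := (hy p hp).differentiableAt
  have hy0' := hy0 p hp
  rw [dt, fderiv_gaussOf_apply hy' hy0', ← dt, hJ,
    dz_fun_mul (analyticOnNhd_gaussOf hy hy0 p hp).differentiableAt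
      (analyticOnNhd_schrodingerPotential hy hy0 p hp).differentiableAt,
    dz_gaussOf_eqOn hy hy0 hp, gaussOf]
  field_simp
  ring

end GaussMap

/-- If a nowhere-zero holomorphic `y(z,t)` satisfies `∂y/∂t = u' y − 2 u y'` with
`u = −y''/y`, then `g = 1/y²` satisfies `∂g/∂t = −2 ∂_z(g u)`, and moreover
`∂g/∂t = −g''' + 3 g' g''/g − (3/2)(g')³/g²` (the Shiffman evolution equation). -/
theorem kdv_evolution_gives_shiffman_evolution_of_gauss_map
    (Ω : Set (ℂ × ℂ)) (hΩ : IsOpen Ω) (y : ℂ × ℂ → ℂ)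
    (hy : AnalyticOnNhd ℂ y Ω) (hy0 : ∀ p ∈ Ω, y p ≠ 0)
    (hJ : ∀ p ∈ Ω,
      dt y p = dz (schrodingerPotential y) p * y p
        - 2 * schrodingerPotential y p * dz y p) :
    ∀ p ∈ Ω,
      dt (gaussOf y) p
          = -2 * dz (fun q => gaussOf y q * schrodingerPotential y q) p ∧
      dt (gaussOf y) p
          = -(dz (dz (dz (gaussOf y))) p)
            + 3 * dz (gaussOf y) p * dz (dz (gaussOf y)) p / gaussOf y p
            - (3 / 2) * (dz (gaussOf y) p) ^ 3 / (gaussOf y p) ^ 2 := by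
  intro p hp
  have hg := analyticOnNhd_gaussOf hy hy0
  have hkdv := dt_gaussOf_eq_neg_two_mul_dz hy hy0 hp (hJ p hp)
  refine ⟨hkdv, ?_⟩
  rw [hkdv, dz_congr hΩ (gaussOf_mul_schrodingerPotential_eqOn hΩ hy hy0) hp]
  exact neg_two_mul_dz_shiffmanFlux (hg p hp).differentiableAt
    (analyticOnNhd_dz hg p hp).differentiableAt
    (analyticOnNhd_dz (analyticOnNhd_dz hg) p hp).differentiableAt (gaussOf_ne_zero (hy0 p hp))
end
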